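/- Let X be a compact Hausdorff uniform space and f : X → X continuous. If f is totally uniform chain transitive (f^n is uniform chain transitive for every n ≥ 1), then f is uniform chain weakly mixing (f^{(2)} : X × X → X × X is uniform chain transitive). -/
import Mathlib


open Set

variable {X : Type*}

/-- The image `E[A]` of a set `A` under an entourage (relation) `E`. -/
def entImage (E : Set (X × X)) (A : Set X) : Set X := {y | ∃ a ∈ A, (a, y) ∈ E}

/-- The hyperspace relation `2^E`: `(A, B) ∈ 2^E` iff `A ⊆ E[B]` and `B ⊆ E[A]`. -/
def hyperRel (E : Set (X × X)) (A B : Set X) : Prop :=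
  A ⊆ entImage E B ∧ B ⊆ entImage E A

/-- An `E`-chain of length `m` from `x` to `y` for the map `f`. -/
def HasChain (f : X → X) (E : Set (X × X)) (m : ℕ) (x y : X) : Prop :=
  ∃ z : ℕ → X, z 0 = x ∧ z m = y ∧ ∀ i < m, (f (z i), z (i + 1)) ∈ E

/-- `f` is uniform chain transitive: every pair of points is joined by an
`E`-chain of length at least `1`, for every entourage `E`. -/
def UCT [UniformSpace X] (f : X → X) : Prop :=
  ∀ x y : X, ∀ E ∈ uniformity X, ∃ m, 1 ≤ m ∧ HasChain f E m x y

/-- A `2^E`-chain of length `m` from `A` to `B` inside the collection `S` of subsets of `X`,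
for the induced map `A ↦ f(A)`. -/
def HyperChain (f : X → X) (E : Set (X × X)) (S : Set (Set X)) (m : ℕ)
    (A B : Set X) : Prop :=
  ∃ Z : ℕ → Set X, Z 0 = A ∧ Z m = B ∧ (∀ i ≤ m, Z i ∈ S) ∧
    ∀ i < m, hyperRel E (f '' Z i) (Z (i + 1))

/-- The induced map on the hyperspace `S ⊆ 𝒫(X)` is uniform chain transitive:
any two members of `S` are joined by `2^E`-chains inside `S`, for every entourage `E`
(the sets `2^E`, `E ∈ 𝒰`, form a base of the induced uniformity `2^𝒰`). -/
def HyperUCT [UniformSpace X] (f : X → X) (S : Set (Set X)) : Prop :=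
  ∀ A ∈ S, ∀ B ∈ S, ∀ E ∈ uniformity X, ∃ m, 1 ≤ m ∧ HyperChain f E S m A B

/-- The hyperspace `2^X` of nonempty closed subsets of `X`. -/
def hyClosed [TopologicalSpace X] : Set (Set X) := {A : Set X | A.Nonempty ∧ IsClosed A}

/-- The hyperspace `F_n(X)` of nonempty subsets of `X` with at most `n` points. -/
def hyFn (X : Type*) (n : ℕ) : Set (Set X) :=
  {A : Set X | A.Nonempty ∧ A.Finite ∧ A.ncard ≤ n}

/-- The hyperspace `F(X)` of all finite nonempty subsets of `X`. -/
def hyFin (X : Type*) : Set (Set X) := {A : Set X | A.Nonempty ∧ A.Finite}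

/-- The hyperspace `C(X)` of nonempty closed connected subsets of `X`. -/
def hyConn [TopologicalSpace X] : Set (Set X) := {A : Set X | IsClosed A ∧ IsConnected A}

lemma hasChain_concat {f : X → X} {E : Set (X × X)} {m n : ℕ} {x y w : X}
    (h1 : HasChain f E m x y) (h2 : HasChain f E n y w) :
    HasChain f E (m + n) x w := by
  obtain ⟨z1, hz10, hz1m, hs1⟩ := h1
  obtain ⟨z2, hz20, hz2n, hs2⟩ := h2
  refine ⟨fun i => if i ≤ m then z1 i else z2 (i - m), by simp [hz10], ?_, ?_⟩
  · rcases Nat.eq_zero_or_pos n with hn | hn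
    · subst hn
      simp only [Nat.add_zero, le_refl, if_pos]
      rw [hz1m, ← hz20, hz2n]
    · have : ¬ m + n ≤ m := by omega
      simp [this, hz2n]
  · intro i hi
    rcases lt_trichotomy i m with hlt | heq | hgt
    · have h1 : i ≤ m := hlt.le
      have h2 : i + 1 ≤ m := hlt
      simp only [h1, h2, if_pos]
      exact hs1 i hlt
    · subst heq
      have h2 : ¬ i + 1 ≤ i := by omega
      simp only [le_refl, if_pos, h2, if_neg]
      have : i + 1 - i = 1 := by omega
      rw [this, hz1m, ← hz20]
      exact hs2 0 (by omega)
    · have h1 : ¬ i ≤ m := by omega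
      have h2 : ¬ i + 1 ≤ m := by omega
      simp only [h1, h2, if_neg, not_false_iff]
      have : i + 1 - m = (i - m) + 1 := by omega
      rw [this]
      exact hs2 (i - m) (by omega)

lemma hasChain_iterate {f : X → X} {E : Set (X × X)} (hE : ∀ x : X, (x, x) ∈ E)
    {N k : ℕ} (hN : 1 ≤ N) {x y : X} (hc : HasChain (f^[N]) E k x y) :
    HasChain f E (k * N) x y := by
  obtain ⟨z, hz0, hzk, hs⟩ := hc
  refine ⟨fun i => f^[i % N] (z (i / N)), by simp [hz0], ?_, ?_⟩
  · have h1 : k * N % N = 0 := by simp [Nat.mul_mod_left]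
    have h2 : k * N / N = k := Nat.mul_div_cancel k (by omega)
    simp [h1, h2, hzk]
  · intro i hi
    have hN0 : 0 < N := by omega
    have hmod : N * (i / N) + i % N = i := Nat.div_add_mod i N
    have hr : i % N < N := Nat.mod_lt _ hN0
    rcases Nat.lt_or_ge (i % N + 1) N with hlt | hge
    · have h1 : (i + 1) % N = i % N + 1 := by
        have : i + 1 = N * (i / N) + (i % N + 1) := by omega
        rw [this, Nat.mul_add_mod, Nat.mod_eq_of_lt hlt]
      have h2 : (i + 1) / N = i / N := by
        have : i + 1 = N * (i / N) + (i % N + 1) := by omega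
        rw [this, Nat.mul_add_div hN0, Nat.div_eq_of_lt hlt, Nat.add_zero]
      simp only [h1, h2, Function.iterate_succ_apply']
      exact hE _
    · have hrN : i % N + 1 = N := by omega
      have hexp : N * (i / N + 1) = N * (i / N) + N := by ring
      have heq : i + 1 = N * (i / N + 1) := by omega
      have h1 : (i + 1) % N = 0 := by rw [heq]; simp [Nat.mul_mod_right]
      have h2 : (i + 1) / N = i / N + 1 := by
        rw [heq, Nat.mul_div_cancel_left _ hN0]
      have hdiv : i / N < k := Nat.div_lt_of_lt_mul (by rw [Nat.mul_comm]; exact hi)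
      have key := Function.iterate_succ_apply' f (i % N) (z (i / N))
      rw [Nat.succ_eq_add_one, hrN] at key
      replace key := key.symm
      simp only [h1, h2, key, Function.iterate_zero_apply]
      exact hs (i / N) hdiv

lemma hasChain_loop_pow {f : X → X} {E : Set (X × X)} {N : ℕ} {x : X}
    (hl : HasChain f E N x x) : ∀ t : ℕ, HasChain f E (t * N) x x := by
  intro t
  induction t with
  | zero => exact ⟨fun _ => x, rfl, rfl, by omega⟩
  | succ t ih =>
      have := hasChain_concat ih hl
      rwa [show t * N + N = (t + 1) * N by ring] at this

theorem stmt14 [UniformSpace X] [CompactSpace X] [T2Space X] (f : X → X)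
    (hf : Continuous f) (h : ∀ n, 1 ≤ n → UCT (f^[n])) :
    UCT (Prod.map f f) := by
  rintro ⟨x₁, x₂⟩ ⟨y₁, y₂⟩ E hE
  obtain ⟨u, hu, v, hv, huv⟩ := entourageProd_subset hE
  set D := u ∩ v with hD
  have hDu : D ∈ uniformity X := Filter.inter_mem hu hv
  have hDrefl : ∀ a : X, (a, a) ∈ D := fun a => refl_mem_uniformity hDu
  have hf1 : UCT f := by have := h 1 le_rfl; simpa using this
  -- chains between x₁ and x₂ to build loops of equal length N
  obtain ⟨m₂, hm₂, hc₁₂⟩ := hf1 x₁ x₂ D hDu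
  obtain ⟨m₁, hm₁, hc₂₁⟩ := hf1 x₂ x₁ D hDu
  set N := m₂ + m₁ with hN
  have hN1 : 1 ≤ N := by omega
  have loop₁ : HasChain f D N x₁ x₁ := hasChain_concat hc₁₂ hc₂₁
  have loop₂ : HasChain f D N x₂ x₂ := by
    have := hasChain_concat hc₂₁ hc₁₂
    rwa [show m₁ + m₂ = N by omega] at this
  -- chains for f^[N]
  obtain ⟨a, ha1, hca⟩ := h N hN1 x₁ y₁ D hDu
  obtain ⟨b, hb1, hcb⟩ := h N hN1 x₂ y₂ D hDu
  have chain₁ : HasChain f D (a * N) x₁ y₁ := hasChain_iterate hDrefl hN1 hca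
  have chain₂ : HasChain f D (b * N) x₂ y₂ := hasChain_iterate hDrefl hN1 hcb
  set c := max a b with hc
  -- pad both chains to length c * N
  have pad₁ : HasChain f D (c * N) x₁ y₁ := by
    have := hasChain_concat (hasChain_loop_pow loop₁ (c - a)) chain₁
    rwa [show (c - a) * N + a * N = c * N by
      rw [← Nat.add_mul]; congr 1; omega] at this
  have pad₂ : HasChain f D (c * N) x₂ y₂ := by
    have := hasChain_concat (hasChain_loop_pow loop₂ (c - b)) chain₂
    rwa [show (c - b) * N + b * N = c * N by
      rw [← Nat.add_mul]; congr 1; omega] at this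
  obtain ⟨z₁, hz₁0, hz₁m, hs₁⟩ := pad₁
  obtain ⟨z₂, hz₂0, hz₂m, hs₂⟩ := pad₂
  refine ⟨c * N, ?_, fun i => (z₁ i, z₂ i), by simp [hz₁0, hz₂0], by simp [hz₁m, hz₂m], ?_⟩
  · have : 1 ≤ c := le_trans ha1 (le_max_left a b)
    exact Nat.one_le_iff_ne_zero.mpr (by positivity)
  · intro i hi
    apply huv
    constructor
    · exact (hs₁ i hi).1
    · exact (hs₂ i hi).2
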